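/- arXiv:1908.03563 — 7 statements merged into one kernel-verified Lean document; each statement's English description precedes it below -/
import Mathlib

section
/- Assume there is no nonzero w ∈ M with ⟨p_i, w⟩ ≥ 0 for all 1 ≤ i ≤ m. Let n < j ≤ m and let e ∈ M satisfy ⟨p_j, e⟩ = −1 and ⟨p_l, e⟩ ≥ 0 for all l ≠ j, 1 ≤ l ≤ m. Then e = p_s^* for some 1 ≤ s ≤ n. -/
/-- Assuming completeness (no nonzero `w ∈ M` with `⟨p_i, w⟩ ≥ 0` for
all `i`), every Demazure root `e` at a ray `p_j` with `j > n` equals some dual basis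
vector `p_s^*`, `1 ≤ s ≤ n`. -/
theorem stmt2 {N : Type*} [AddCommGroup N] [Module ℤ N]
    (n m : ℕ) (hn : 1 ≤ n) (hmn : n ≤ m)
    (p : Fin m → N) (b : Module.Basis (Fin n) ℤ N)
    (hb : ∀ i : Fin n, b i = p (Fin.castLE hmn i))
    (α : Fin m → Fin n → ℕ)
    (hp : ∀ j : Fin m, n ≤ j.val → p j = -∑ l : Fin n, (α j l : ℤ) • b l)
    (hcomp : ∀ w : Module.Dual ℤ N, (∀ i : Fin m, 0 ≤ w (p i)) → w = 0)
    (j : Fin m) (hj : n ≤ j.val) (e : Module.Dual ℤ N)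
    (he1 : e (p j) = -1) (he2 : ∀ l : Fin m, l ≠ j → 0 ≤ e (p l)) :
    ∃ s : Fin n, e = b.coord s := by
  -- basis vectors are distinct from p j
  have hbne : ∀ l : Fin n, (Fin.castLE hmn l) ≠ j := by
    intro l h
    have := h ▸ (show (Fin.castLE hmn l).val < n from l.isLt)
    omega
  have hbe : ∀ l : Fin n, 0 ≤ e (b l) := by
    intro l
    rw [hb l]
    exact he2 _ (hbne l)
  -- sum equation
  have hsum : ∑ l : Fin n, (α j l : ℤ) * e (b l) = 1 := by
    have := he1
    rw [hp j hj] at this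
    simp only [map_neg, map_sum, map_zsmul, smul_eq_mul] at this
    linarith
  -- find s with positive term
  have hex : ∃ s : Fin n, 0 < (α j s : ℤ) * e (b s) := by
    by_contra h
    push_neg at h
    have : ∑ l : Fin n, (α j l : ℤ) * e (b l) ≤ 0 :=
      Finset.sum_nonpos fun l _ => h l
    omega
  obtain ⟨s, hs⟩ := hex
  have hα : 1 ≤ (α j s : ℤ) := by
    rcases (Nat.eq_zero_or_pos (α j s)) with h | h
    · simp [h] at hs
    · exact_mod_cast h
  have hes : 1 ≤ e (b s) := by nlinarith [hbe s]
  -- the difference pairs nonnegatively with all rays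
  refine ⟨s, ?_⟩
  have hw : ∀ i : Fin m, 0 ≤ (e - b.coord s) (p i) := by
    intro i
    rcases lt_or_ge i.val n with h | h
    · have : p i = b ⟨i.val, h⟩ := by
        rw [hb ⟨i.val, h⟩]; congr 1
      rw [this]
      simp only [LinearMap.sub_apply, Module.Basis.coord_apply, Module.Basis.repr_self]
      by_cases hls : (⟨i.val, h⟩ : Fin n) = s
      · rw [hls]; simp only [Finsupp.single_eq_same]; linarith
      · rw [Finsupp.single_apply_eq_zero.mpr (by tauto)]
        have := hbe ⟨i.val, h⟩
        simpa using this
    · have hpi := hp i h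
      have hcs : (b.coord s) (p i) = -(α i s : ℤ) := by
        rw [hpi]
        simp only [map_neg, map_sum, map_zsmul, smul_eq_mul, Module.Basis.coord_apply,
          Module.Basis.repr_self, Finsupp.single_apply]
        rw [Finset.sum_congr rfl (fun l _ => by rw [mul_ite, mul_one, mul_zero]),
          Finset.sum_ite_eq' Finset.univ s (fun l => ((α i l : ℤ)))]
        simp
      simp only [LinearMap.sub_apply, hcs]
      by_cases hij : i = j
      · subst hij; rw [he1]; linarith
      · have := he2 i hij; linarith
  have := hcomp _ hw
  have : e - b.coord s = 0 := this
  exact sub_eq_zero.mp this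
end

section
/- Assume there is no nonzero w ∈ M with ⟨p_i, w⟩ ≥ 0 for all 1 ≤ i ≤ m. Let n < j ≤ m and let e ∈ M satisfy ⟨p_j, e⟩ = −1 and ⟨p_l, e⟩ ≥ 0 for all l ≠ j, 1 ≤ l ≤ m. Then there exists 1 ≤ s ≤ n such that −e satisfies ⟨p_s, −e⟩ = −1 and ⟨p_l, −e⟩ ≥ 0 for all l ≠ s, 1 ≤ l ≤ m; in particular e is a semisimple root, so every unipotent Demazure root satisfies the inequality conditions at one of p_1, …, p_n. -/
lemma aux3 {N : Type*} [AddCommGroup N] [Module ℤ N]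
    (n m : ℕ) (hmn : n ≤ m)
    (p : Fin m → N) (b : Module.Basis (Fin n) ℤ N)
    (hb : ∀ i : Fin n, b i = p (Fin.castLE hmn i))
    (α : Fin m → Fin n → ℕ)
    (hp : ∀ j : Fin m, n ≤ j.val → p j = -∑ l : Fin n, (α j l : ℤ) • b l)
    (hcomp : ∀ w : Module.Dual ℤ N, (∀ i : Fin m, 0 ≤ w (p i)) → w = 0)
    (j : Fin m) (hj : n ≤ j.val) (e : Module.Dual ℤ N)
    (he1 : e (p j) = -1) (he2 : ∀ l : Fin m, l ≠ j → 0 ≤ e (p l)) :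
    ∃ s : Fin n, (-e) (p (Fin.castLE hmn s)) = -1 ∧
        ∀ l : Fin m, l ≠ Fin.castLE hmn s → 0 ≤ (-e) (p l) := by
  have hkey : ∀ (f : Module.Dual ℤ N) (k : Fin m), n ≤ k.val →
      f (p k) = -∑ l : Fin n, (α k l : ℤ) * f (p (Fin.castLE hmn l)) := by
    intro f k hk
    rw [hp k hk, map_neg, map_sum]
    congr 1
    refine Finset.sum_congr rfl fun l _ => ?_
    rw [show f ((α k l : ℤ) • b l) = (α k l : ℤ) • f (b l) from map_zsmul f _ _, zsmul_eq_mul, hb l]; norm_cast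
  set c : Fin n → ℤ := fun l => e (p (Fin.castLE hmn l)) with hc_def
  have hne : ∀ l : Fin n, Fin.castLE hmn l ≠ j := by
    intro l h
    have := congrArg Fin.val h
    simp only [Fin.coe_castLE] at this
    omega
  have hc : ∀ l, 0 ≤ c l := fun l => he2 _ (hne l)
  have hsum : ∑ l : Fin n, (α j l : ℤ) * c l = 1 := by
    have h := hkey e j hj
    rw [he1] at h
    linarith
  have hterm_nonneg : ∀ l : Fin n, 0 ≤ (α j l : ℤ) * c l :=
    fun l => mul_nonneg (Int.natCast_nonneg _) (hc l)
  have hex : ∃ s : Fin n, 0 < (α j s : ℤ) * c s := by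
    by_contra h
    push_neg at h
    have : ∑ l : Fin n, (α j l : ℤ) * c l ≤ 0 := Finset.sum_nonpos fun l _ => h l
    linarith
  obtain ⟨s, hs⟩ := hex
  have hs1 : (α j s : ℤ) * c s = 1 := by
    have hle : (α j s : ℤ) * c s ≤ 1 := by
      rw [← hsum]
      exact Finset.single_le_sum (fun l _ => hterm_nonneg l) (Finset.mem_univ s)
    omega
  have hcs : c s = 1 := by
    rcases Int.mul_eq_one_iff_eq_one_or_neg_one.mp hs1 with ⟨_, h⟩ | ⟨_, h⟩
    · exact h
    · have := hc s; omega
  have herase : ∑ l ∈ Finset.univ.erase s, (α j l : ℤ) * c l = 0 := by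
    have h := Finset.add_sum_erase Finset.univ (fun l => (α j l : ℤ) * c l)
      (Finset.mem_univ s)
    linarith
  have hrest : ∀ t : Fin n, t ≠ s → (α j t : ℤ) * c t = 0 := by
    intro t ht
    exact (Finset.sum_eq_zero_iff_of_nonneg
      (fun l _ => hterm_nonneg l)).mp herase t (by simp [ht])
  have hczero : ∀ t : Fin n, t ≠ s → c t = 0 := by
    intro t ht
    by_contra hct
    have hctpos : 0 < c t := lt_of_le_of_ne (hc t) (Ne.symm hct)
    have halpha : ∀ k : Fin m, n ≤ k.val → (α k t : ℤ) = 0 := by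
      intro k hk
      by_cases hkj : k = j
      · subst hkj
        rcases mul_eq_zero.mp (hrest t ht) with h | h
        · exact h
        · omega
      · have hek : 0 ≤ e (p k) := he2 k hkj
        have hkk := hkey e k hk
        have hsum2 : ∑ l : Fin n, (α k l : ℤ) * c l ≤ 0 := by
          rw [hkk] at hek; linarith
        have htermle : (α k t : ℤ) * c t ≤ ∑ l : Fin n, (α k l : ℤ) * c l :=
          Finset.single_le_sum
            (fun l _ => mul_nonneg (Int.natCast_nonneg _) (hc l)) (Finset.mem_univ t)
        have h0 : (α k t : ℤ) * c t = 0 :=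
          le_antisymm (le_trans htermle hsum2)
            (mul_nonneg (Int.natCast_nonneg _) (hc t))
        rcases mul_eq_zero.mp h0 with h | h
        · exact h
        · omega
    set w := b.coord t with hw
    have hwb : ∀ l : Fin n, w (b l) = if l = t then 1 else 0 := by
      intro l
      rw [hw, Module.Basis.coord_apply, Module.Basis.repr_self, Finsupp.single_apply]
    have hwp : ∀ i : Fin m, 0 ≤ w (p i) := by
      intro i
      by_cases hi : i.val < n
      · have hpi : p i = b ⟨i.val, hi⟩ := by
          rw [hb]; exact congrArg p (Fin.ext rfl)
        rw [hpi, hwb]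
        split <;> norm_num
      · push_neg at hi
        rw [hkey w i hi]
        have hsw : ∑ l : Fin n, (α i l : ℤ) * w (p (Fin.castLE hmn l)) = (α i t : ℤ) := by
          rw [Finset.sum_eq_single t]
          · rw [← hb, hwb]; simp
          · intro l _ hl
            rw [← hb, hwb]; simp [hl]
          · simp
        rw [hsw, halpha i hi]
        norm_num
    have hw0 := hcomp w hwp
    have hone : w (b t) = 1 := by rw [hwb]; simp
    rw [hw0] at hone
    simp at hone
  refine ⟨s, ?_, ?_⟩
  · rw [LinearMap.neg_apply, show e (p (Fin.castLE hmn s)) = c s from rfl, hcs]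
  · intro l hl
    rw [LinearMap.neg_apply, neg_nonneg]
    by_cases hlv : l.val < n
    · have ht : l = Fin.castLE hmn ⟨l.val, hlv⟩ := Fin.ext rfl
      have hts : (⟨l.val, hlv⟩ : Fin n) ≠ s := by
        intro h; apply hl; rw [ht, h]
      rw [ht]
      exact le_of_eq (hczero _ hts)
    · push_neg at hlv
      rw [hkey e l hlv]
      exact neg_nonpos_of_nonneg (Finset.sum_nonneg fun l' _ =>
        mul_nonneg (Int.natCast_nonneg _) (hc l'))

/-- Assuming completeness, if `e` is a Demazure root at a ray `p_j`
with `j > n`, then `-e` is a Demazure root at some ray `p_s` with `1 ≤ s ≤ n` (so `e`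
is semisimple); in particular every unipotent Demazure root satisfies the root
inequality conditions at one of `p_1, …, p_n`. -/
theorem stmt3 {N : Type*} [AddCommGroup N] [Module ℤ N]
    (n m : ℕ) (hn : 1 ≤ n) (hmn : n ≤ m)
    (p : Fin m → N) (b : Module.Basis (Fin n) ℤ N)
    (hb : ∀ i : Fin n, b i = p (Fin.castLE hmn i))
    (α : Fin m → Fin n → ℕ)
    (hp : ∀ j : Fin m, n ≤ j.val → p j = -∑ l : Fin n, (α j l : ℤ) • b l)
    (hcomp : ∀ w : Module.Dual ℤ N, (∀ i : Fin m, 0 ≤ w (p i)) → w = 0)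
    (j : Fin m) (hj : n ≤ j.val) (e : Module.Dual ℤ N)
    (he1 : e (p j) = -1) (he2 : ∀ l : Fin m, l ≠ j → 0 ≤ e (p l)) :
    (∃ s : Fin n, (-e) (p (Fin.castLE hmn s)) = -1 ∧
        ∀ l : Fin m, l ≠ Fin.castLE hmn s → 0 ≤ (-e) (p l)) ∧
      ∀ e' : Module.Dual ℤ N,
        (∃ i : Fin m, e' (p i) = -1 ∧ ∀ l : Fin m, l ≠ i → 0 ≤ e' (p l)) →
        ¬(∃ i : Fin m, (-e') (p i) = -1 ∧ ∀ l : Fin m, l ≠ i → 0 ≤ (-e') (p l)) →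
        ∃ s : Fin n, e' (p (Fin.castLE hmn s)) = -1 ∧
          ∀ l : Fin m, l ≠ Fin.castLE hmn s → 0 ≤ e' (p l) := by
  refine ⟨aux3 n m hmn p b hb α hp hcomp j hj e he1 he2, ?_⟩
  rintro e' ⟨i, h1, h2⟩ hns
  by_cases hi : i.val < n
  · refine ⟨⟨i.val, hi⟩, ?_, ?_⟩
    · have hci : Fin.castLE hmn ⟨i.val, hi⟩ = i := Fin.ext rfl
      rw [hci]; exact h1
    · intro l hl
      refine h2 l fun h => hl ?_
      rw [h]; exact (Fin.ext rfl)
  · push_neg at hi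
    obtain ⟨s, hs1, hs2⟩ := aux3 n m hmn p b hb α hp hcomp i hi e' h1 h2
    exact absurd ⟨Fin.castLE hmn s, hs1, hs2⟩ hns
end

section
/- Assume there is no nonzero w ∈ M with ⟨p_i, w⟩ ≥ 0 for all 1 ≤ i ≤ m. Let R_i = {e ∈ M : ⟨p_i, e⟩ = −1 and ⟨p_l, e⟩ ≥ 0 for all l ≠ i}, R = R_1 ∪ … ∪ R_m, and S = {e ∈ R : −e ∈ R}. Then there exists u ∈ N such that ⟨u, e⟩ ≠ 0 for every e ∈ S and ⟨u, e⟩ < 0 for every e ∈ R_{n+1} ∪ … ∪ R_m; consequently every e ∈ S with ⟨u, e⟩ > 0 lies in R_1 ∪ … ∪ R_n. -/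
/-- `e` satisfies the Demazure-root inequality conditions at the ray `p i`. -/
def IsDRoot {N : Type*} [AddCommGroup N] [Module ℤ N] {m : ℕ} (p : Fin m → N)
    (i : Fin m) (e : Module.Dual ℤ N) : Prop :=
  e (p i) = -1 ∧ ∀ l : Fin m, l ≠ i → 0 ≤ e (p l)

lemma eval_u {N : Type*} [AddCommGroup N] [Module ℤ N] {n : ℕ}
    (b : Module.Basis (Fin n) ℤ N) (e : Module.Dual ℤ N) :
    e (-∑ k : Fin n, ((k : ℤ) + 1) • b k) = -∑ k : Fin n, ((k : ℤ) + 1) * e (b k) := by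
  simp [map_sum]

/-- Assuming completeness, there exists `u ∈ N` such that `⟨u, e⟩ ≠ 0`
for every semisimple root `e`, `⟨u, e⟩ < 0` for every root at a ray `p_j` with `j > n`;
consequently every semisimple root `e` with `⟨u, e⟩ > 0` is a root at one of
`p_1, …, p_n`. -/
theorem stmt4 {N : Type*} [AddCommGroup N] [Module ℤ N]
    (n m : ℕ) (hn : 1 ≤ n) (hmn : n ≤ m)
    (p : Fin m → N) (b : Module.Basis (Fin n) ℤ N)
    (hb : ∀ i : Fin n, b i = p (Fin.castLE hmn i))
    (α : Fin m → Fin n → ℕ)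
    (hp : ∀ j : Fin m, n ≤ j.val → p j = -∑ l : Fin n, (α j l : ℤ) • b l)
    (hcomp : ∀ w : Module.Dual ℤ N, (∀ i : Fin m, 0 ≤ w (p i)) → w = 0) :
    ∃ u : N,
      (∀ e : Module.Dual ℤ N,
        (∃ i : Fin m, IsDRoot p i e) → (∃ i : Fin m, IsDRoot p i (-e)) → e u ≠ 0) ∧
      (∀ e : Module.Dual ℤ N, ∀ j : Fin m, n ≤ j.val → IsDRoot p j e → e u < 0) ∧
      (∀ e : Module.Dual ℤ N,
        (∃ i : Fin m, IsDRoot p i e) → (∃ i : Fin m, IsDRoot p i (-e)) →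
        0 < e u → ∃ s : Fin n, IsDRoot p (Fin.castLE hmn s) e) := by
  classical
  refine ⟨-∑ k : Fin n, ((k : ℤ) + 1) • b k, ?_, ?_, ?_⟩
  · -- part 1 : semisimple roots are nonzero on u
    rintro e ⟨i, hi⟩ ⟨i', hi'⟩
    rw [eval_u, neg_ne_zero]
    have hii' : i ≠ i' := by
      intro h
      have h1 := hi.1
      have h2 := hi'.1
      rw [← h] at h2
      simp only [LinearMap.neg_apply] at h2
      omega
    have hcoord : ∀ k : Fin n, e (b k) =
        (if Fin.castLE hmn k = i' then (1 : ℤ) else 0) -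
        (if Fin.castLE hmn k = i then (1 : ℤ) else 0) := by
      intro k
      by_cases h1 : Fin.castLE hmn k = i
      · have h2 : Fin.castLE hmn k ≠ i' := h1 ▸ hii'
        rw [hb k, h1]
        simp [hi.1, h1 ▸ hii', if_neg h2, hii']
      · by_cases h2 : Fin.castLE hmn k = i'
        · have := hi'.1
          simp only [LinearMap.neg_apply] at this
          rw [hb k, h2]
          simp [h1, h2, hii', Ne.symm hii', show e (p i') = 1 by omega]
        · have a1 := hi.2 _ h1
          have a2 := hi'.2 _ h2
          simp only [LinearMap.neg_apply] at a2
          rw [hb k]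
          simp [h1, h2]
          omega
    have hsum : ∑ k : Fin n, ((k : ℤ) + 1) * e (b k) =
        (∑ k : Fin n, if Fin.castLE hmn k = i' then ((k : ℤ) + 1) else 0) -
        (∑ k : Fin n, if Fin.castLE hmn k = i then ((k : ℤ) + 1) else 0) := by
      rw [← Finset.sum_sub_distrib]
      refine Finset.sum_congr rfl fun k _ => ?_
      rw [hcoord k]
      by_cases h1 : Fin.castLE hmn k = i <;> by_cases h2 : Fin.castLE hmn k = i' <;>
        simp [h1, h2, hii', Ne.symm hii']
    rw [hsum]
    have hinj : Function.Injective (Fin.castLE hmn) := Fin.castLE_injective hmn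
    have hone : ∀ (j0 : Fin m) (a : Fin n), Fin.castLE hmn a = j0 →
        (∑ k : Fin n, if Fin.castLE hmn k = j0 then ((k : ℤ) + 1) else 0) = (a : ℤ) + 1 := by
      intro j0 a ha
      rw [Finset.sum_eq_single a]
      · simp [ha]
      · intro k _ hk
        rw [if_neg]
        intro h
        exact hk (hinj (by rw [h, ha]))
      · simp
    have hnone : ∀ (j0 : Fin m), (¬ ∃ a : Fin n, Fin.castLE hmn a = j0) →
        (∑ k : Fin n, if Fin.castLE hmn k = j0 then ((k : ℤ) + 1) else 0) = 0 := by
      intro j0 h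
      refine Finset.sum_eq_zero fun k _ => if_neg fun hk => h ⟨k, hk⟩
    by_cases hA : ∃ a : Fin n, Fin.castLE hmn a = i
    · obtain ⟨a, ha⟩ := hA
      rw [hone i a ha]
      by_cases hB : ∃ c : Fin n, Fin.castLE hmn c = i'
      · obtain ⟨c, hc⟩ := hB
        rw [hone i' c hc]
        have hac : a ≠ c := fun h => hii' (by rw [← ha, ← hc, h])
        have : (a : ℕ) ≠ (c : ℕ) := fun h => hac (Fin.ext h)
        intro h
        omega
      · rw [hnone i' hB]
        intro h
        omega
    · rw [hnone i hA]
      by_cases hB : ∃ c : Fin n, Fin.castLE hmn c = i'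
      · obtain ⟨c, hc⟩ := hB
        rw [hone i' c hc]
        intro h
        omega
      · -- e vanishes on the whole basis, hence e = 0, contradicting e (p i) = -1
        exfalso
        have hz : ∀ k : Fin n, e (b k) = 0 := by
          intro k
          rw [hcoord k, if_neg (fun h => hB ⟨k, h⟩), if_neg (fun h => hA ⟨k, h⟩)]
          ring
        have he : e = 0 := b.ext fun k => by simp [hz k]
        have := hi.1
        rw [he] at this
        simp at this
  · -- part 2 : roots at rays beyond the basis are negative on u
    intro e j hj hroot
    rw [eval_u]
    have hpos : ∀ k : Fin n, 0 ≤ e (b k) := by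
      intro k
      rw [hb k]
      refine hroot.2 _ fun h => ?_
      have := congrArg Fin.val h
      simp at this
      omega
    have hne0 : ∃ k : Fin n, 0 < e (b k) := by
      by_contra h
      push_neg at h
      have hz : ∀ k, e (b k) = 0 := fun k => le_antisymm (h k) (hpos k)
      have he : e = 0 := b.ext fun k => by simp [hz k]
      have := hroot.1
      rw [he] at this
      simp at this
    obtain ⟨k0, hk0⟩ := hne0
    have : 0 < ∑ k : Fin n, ((k : ℤ) + 1) * e (b k) := by
      refine Finset.sum_pos' (fun k _ => mul_nonneg (by positivity) (hpos k))
        ⟨k0, Finset.mem_univ _, mul_pos (by positivity) hk0⟩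
    omega
  · -- part 3 : semisimple roots positive on u are roots at basis rays
    rintro e ⟨i, hi⟩ _ hgt
    rw [eval_u] at hgt
    have hsum : ∑ k : Fin n, ((k : ℤ) + 1) * e (b k) < 0 := by omega
    have : ∃ k : Fin n, ((k : ℤ) + 1) * e (b k) < 0 := by
      by_contra h
      push_neg at h
      have := Finset.sum_nonneg (fun k (_ : k ∈ Finset.univ) => h k)
      omega
    obtain ⟨k, hk⟩ := this
    have hneg : e (b k) < 0 := by
      rcases lt_trichotomy (e (b k)) 0 with h | h | h
      · exact h
      · rw [h] at hk; omega
      · have : 0 < ((k : ℤ) + 1) * e (b k) := mul_pos (by positivity) h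
        omega
    have heq : Fin.castLE hmn k = i := by
      by_contra h
      have := hi.2 _ h
      rw [← hb k] at this
      omega
    exact ⟨k, heq ▸ hi⟩
end

section
/- Assume there is no nonzero w ∈ M with ⟨p_i, w⟩ ≥ 0 for all 1 ≤ i ≤ m. Then the set R = {e ∈ M : for some 1 ≤ i ≤ m, ⟨p_i, e⟩ = −1 and ⟨p_l, e⟩ ≥ 0 for all l ≠ i} is finite. -/
/-- Assuming completeness, the set of all Demazure roots is finite. -/
theorem stmt5 {N : Type*} [AddCommGroup N] [Module ℤ N]
    (n m : ℕ) (hn : 1 ≤ n) (hmn : n ≤ m)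
    (p : Fin m → N) (b : Module.Basis (Fin n) ℤ N)
    (hb : ∀ i : Fin n, b i = p (Fin.castLE hmn i))
    (α : Fin m → Fin n → ℕ)
    (hp : ∀ j : Fin m, n ≤ j.val → p j = -∑ l : Fin n, (α j l : ℤ) • b l)
    (hcomp : ∀ w : Module.Dual ℤ N, (∀ i : Fin m, 0 ≤ w (p i)) → w = 0) :
    {e : Module.Dual ℤ N | ∃ i : Fin m, IsDRoot p i e}.Finite := by
  have key : ∀ i : Fin m, {e : Module.Dual ℤ N | IsDRoot p i e}.Finite := by
    intro i
    by_contra hinf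
    replace hinf : Set.Infinite {e : Module.Dual ℤ N | IsDRoot p i e} := hinf
    obtain g := hinf.natEmbedding
    have hpwo : (Set.univ : Set (Fin m → ℕ)).IsPWO := Set.isPWO_of_wellQuasiOrderedLE Set.univ
    obtain ⟨k, k', hkk', hle⟩ :=
      hpwo.exists_lt (f := fun k l => (((g k : _) : Module.Dual ℤ N) (p l)).toNat) (fun _ => trivial)
    set e : Module.Dual ℤ N := ((g k : _) : Module.Dual ℤ N) with he_def
    set f : Module.Dual ℤ N := ((g k' : _) : Module.Dual ℤ N) with hf_def
    have he : IsDRoot p i e := (g k).2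
    have hf : IsDRoot p i f := (g k').2
    have hw : ∀ l : Fin m, 0 ≤ (f - e) (p l) := by
      intro l
      rcases eq_or_ne l i with rfl | hl
      · simp [LinearMap.sub_apply, he.1, hf.1]
      · have h1 : (0 : ℤ) ≤ e (p l) := he.2 l hl
        have h2 : (0 : ℤ) ≤ f (p l) := hf.2 l hl
        have h3 : (e (p l)).toNat ≤ (f (p l)).toNat := hle l
        have h4 : e (p l) ≤ f (p l) := by
          rw [← Int.toNat_of_nonneg h1, ← Int.toNat_of_nonneg h2]
          exact_mod_cast h3
        simpa [LinearMap.sub_apply] using sub_nonneg.mpr h4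
    have hw0 : f - e = 0 := hcomp _ hw
    have : g k' = g k := Subtype.ext (by rw [← he_def, ← hf_def, ← sub_eq_zero, hw0])
    exact absurd (g.injective this) (Nat.ne_of_lt hkk').symm
  have : {e : Module.Dual ℤ N | ∃ i : Fin m, IsDRoot p i e}
      = ⋃ i : Fin m, {e : Module.Dual ℤ N | IsDRoot p i e} := by
    ext e; simp [Set.mem_iUnion]
  rw [this]
  exact Set.finite_iUnion key
end

section
/- The following are equivalent: (1) there exist indices 3 ≤ j, j' ≤ m with α_{j1} > α_{j2} and α_{j'1} < α_{j'2}; (2) R_1 = {(−1, 0)} and R_2 = {(0, −1)}. -/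
/-- The standard pairing on `ℤ²`. -/
def pair (p e : ℤ × ℤ) : ℤ := p.1 * e.1 + p.2 * e.2

/-- The rays of the fan: `p 0 = (1,0)`, `p 1 = (0,1)` and
`p j = (-α_{j1}, -α_{j2})` for the remaining indices. -/
def ray {m : ℕ} (α1 α2 : Fin m → ℕ) (j : Fin m) : ℤ × ℤ :=
  if j.val = 0 then (1, 0) else if j.val = 1 then (0, 1) else (-(α1 j : ℤ), -(α2 j : ℤ))

/-- The set of Demazure roots at the ray `p i`. -/
def Rset {m : ℕ} (p : Fin m → ℤ × ℤ) (i : Fin m) : Set (ℤ × ℤ) :=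
  {e | pair (p i) e = -1 ∧ ∀ j : Fin m, j ≠ i → 0 ≤ pair (p j) e}

lemma rset0 {m : ℕ} (hm : 2 ≤ m) (α1 α2 : Fin m → ℕ) :
    Rset (ray α1 α2) (⟨0, Nat.lt_of_lt_of_le (by decide) hm⟩ : Fin m) = {((-1, 0) : ℤ × ℤ)} ↔
      ∃ j : Fin m, 2 ≤ j.val ∧ α1 j < α2 j := by
  constructor
  · intro h
    by_contra hc
    push_neg at hc
    have h1 : ((-1, 1) : ℤ × ℤ) ∈ Rset (ray α1 α2) (⟨0, by omega⟩ : Fin m) := by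
      refine ⟨by simp [pair, ray, Rset], ?_⟩
      intro j hj
      have hj0 : j.val ≠ 0 := fun h' => hj (Fin.ext h')
      rcases eq_or_ne j.val 1 with h1 | h1
      · simp [pair, ray, h1, hj0]
      · have h2 : 2 ≤ j.val := by omega
        have hle := hc j h2
        simp only [pair, ray, hj0, h1, if_false]
        nlinarith [hle]
    rw [h] at h1
    simp at h1
  · rintro ⟨j, hj2, hjlt⟩
    ext e
    simp only [Set.mem_singleton_iff]
    constructor
    · rintro ⟨he, hall⟩
      have he1 : e.1 = -1 := by
        simpa [pair, ray] using he
      have he2 : 0 ≤ e.2 := by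
        have := hall ⟨1, by omega⟩ (by simp [Fin.ext_iff])
        simpa [pair, ray] using this
      have hj0 : j.val ≠ 0 := by omega
      have hj1 : j.val ≠ 1 := by omega
      have hkey := hall j (by simp [Fin.ext_iff]; omega)
      simp only [pair, ray, hj0, hj1, if_false, he1] at hkey
      have he2' : e.2 = 0 := by
        by_contra hne
        have h21 : 1 ≤ e.2 := by omega
        have hc1 : (α1 j : ℤ) < α2 j := by exact_mod_cast hjlt
        nlinarith
      exact Prod.ext he1 he2'
    · rintro rfl
      refine ⟨by simp [pair, ray], ?_⟩
      intro k hk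
      have hk0 : k.val ≠ 0 := fun h' => hk (Fin.ext h')
      rcases eq_or_ne k.val 1 with h1 | h1
      · simp [pair, ray, h1, hk0]
      · simp [pair, ray, hk0, h1]

lemma rset1 {m : ℕ} (hm : 2 ≤ m) (α1 α2 : Fin m → ℕ) :
    Rset (ray α1 α2) (⟨1, Nat.lt_of_lt_of_le (by decide) hm⟩ : Fin m) = {((0, -1) : ℤ × ℤ)} ↔
      ∃ j : Fin m, 2 ≤ j.val ∧ α2 j < α1 j := by
  constructor
  · intro h
    by_contra hc
    push_neg at hc
    have h1 : ((1, -1) : ℤ × ℤ) ∈ Rset (ray α1 α2) (⟨1, by omega⟩ : Fin m) := by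
      refine ⟨by simp [pair, ray, Rset], ?_⟩
      intro j hj
      have hj1 : j.val ≠ 1 := fun h' => hj (Fin.ext h')
      rcases eq_or_ne j.val 0 with h0 | h0
      · simp [pair, ray, h0]
      · have h2 : 2 ≤ j.val := by omega
        have hle := hc j h2
        simp only [pair, ray, h0, hj1, if_false]
        nlinarith [hle]
    rw [h] at h1
    simp at h1
  · rintro ⟨j, hj2, hjlt⟩
    ext e
    simp only [Set.mem_singleton_iff]
    constructor
    · rintro ⟨he, hall⟩
      have he2 : e.2 = -1 := by
        simpa [pair, ray] using he
      have he1 : 0 ≤ e.1 := by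
        have := hall ⟨0, by omega⟩ (by simp [Fin.ext_iff])
        simpa [pair, ray] using this
      have hj0 : j.val ≠ 0 := by omega
      have hj1 : j.val ≠ 1 := by omega
      have hkey := hall j (by simp [Fin.ext_iff]; omega)
      simp only [pair, ray, hj0, hj1, if_false, he2] at hkey
      have he1' : e.1 = 0 := by
        by_contra hne
        have h11 : 1 ≤ e.1 := by omega
        have hc1 : (α2 j : ℤ) < α1 j := by exact_mod_cast hjlt
        nlinarith
      exact Prod.ext he1' he2
    · rintro rfl
      refine ⟨by simp [pair, ray], ?_⟩
      intro k hk
      have hk1 : k.val ≠ 1 := fun h' => hk (Fin.ext h')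
      rcases eq_or_ne k.val 0 with h0 | h0
      · simp [pair, ray, h0]
      · simp [pair, ray, h0, hk1]

/-- The fan is wide (there are `j, j' ≥ 3` with `α_{j1} > α_{j2}` and
`α_{j'1} < α_{j'2}`) if and only if `R_1 = {(-1,0)}` and `R_2 = {(0,-1)}`. -/
theorem stmt7 (m : ℕ) (hm : 2 ≤ m) (α1 α2 : Fin m → ℕ) :
    (∃ j j' : Fin m, 2 ≤ j.val ∧ 2 ≤ j'.val ∧ α2 j < α1 j ∧ α1 j' < α2 j') ↔
      (Rset (ray α1 α2) (⟨0, by omega⟩ : Fin m) = {((-1, 0) : ℤ × ℤ)} ∧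
        Rset (ray α1 α2) (⟨1, by omega⟩ : Fin m) = {((0, -1) : ℤ × ℤ)}) := by
  rw [rset0 hm, rset1 hm]
  constructor
  · rintro ⟨j, j', h1, h2, h3, h4⟩
    exact ⟨⟨j', h2, h4⟩, ⟨j, h1, h3⟩⟩
  · rintro ⟨⟨j', h2, h4⟩, ⟨j, h1, h3⟩⟩
    exact ⟨j, j', h1, h2, h3, h4⟩
end

section
/- Assume that α_{j1} > 0 for some 3 ≤ j ≤ m and α_{j'2} > 0 for some 3 ≤ j' ≤ m. If R_1 has at least two elements and R_2 has at least two elements, then R_1 = {(−1, 0), (−1, 1)} and R_2 = {(0, −1), (1, −1)}. -/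
lemma mem_R0 {m : ℕ} (hm : 2 ≤ m) (α1 α2 : Fin m → ℕ) (e : ℤ × ℤ) :
    e ∈ Rset (ray α1 α2) (⟨0, by omega⟩ : Fin m) ↔
      e.1 = -1 ∧ 0 ≤ e.2 ∧ ∀ j : Fin m, 2 ≤ j.val → (α2 j : ℤ) * e.2 ≤ (α1 j : ℤ) := by
  constructor
  · rintro ⟨ha, hb⟩
    have he1 : e.1 = -1 := by simpa [pair, ray] using ha
    have he2 : 0 ≤ e.2 := by
      have := hb ⟨1, by omega⟩ (by simp [Fin.ext_iff])
      simpa [pair, ray] using this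
    refine ⟨he1, he2, fun j hj => ?_⟩
    have hj0 : j.val ≠ 0 := by omega
    have hj1 : j.val ≠ 1 := by omega
    have := hb j (by simp [Fin.ext_iff, hj0])
    simp [pair, ray, hj0, hj1, he1] at this
    linarith
  · rintro ⟨he1, he2, h⟩
    refine ⟨by simpa [pair, ray] using he1, fun j hj => ?_⟩
    rcases Nat.lt_or_ge j.val 2 with hlt | hge
    · have hj1 : j.val = 1 := by
        have : j.val ≠ 0 := by simpa [Fin.ext_iff] using hj
        omega
      simpa [pair, ray, hj1] using he2
    · have hj0 : j.val ≠ 0 := by omega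
      have hj1 : j.val ≠ 1 := by omega
      have := h j hge
      simp [pair, ray, hj0, hj1, he1]
      linarith

lemma mem_R1 {m : ℕ} (hm : 2 ≤ m) (α1 α2 : Fin m → ℕ) (e : ℤ × ℤ) :
    e ∈ Rset (ray α1 α2) (⟨1, by omega⟩ : Fin m) ↔
      e.2 = -1 ∧ 0 ≤ e.1 ∧ ∀ j : Fin m, 2 ≤ j.val → (α1 j : ℤ) * e.1 ≤ (α2 j : ℤ) := by
  constructor
  · rintro ⟨ha, hb⟩
    have he2 : e.2 = -1 := by simpa [pair, ray] using ha
    have he1 : 0 ≤ e.1 := by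
      have := hb ⟨0, by omega⟩ (by simp [Fin.ext_iff])
      simpa [pair, ray] using this
    refine ⟨he2, he1, fun j hj => ?_⟩
    have hj0 : j.val ≠ 0 := by omega
    have hj1 : j.val ≠ 1 := by omega
    have := hb j (by simp [Fin.ext_iff, hj1])
    simp [pair, ray, hj0, hj1, he2] at this
    linarith
  · rintro ⟨he2, he1, h⟩
    refine ⟨by simpa [pair, ray] using he2, fun j hj => ?_⟩
    rcases Nat.lt_or_ge j.val 2 with hlt | hge
    · have hj0 : j.val = 0 := by
        have : j.val ≠ 1 := by simpa [Fin.ext_iff] using hj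
        omega
      simpa [pair, ray, hj0] using he1
    · have hj0 : j.val ≠ 0 := by omega
      have hj1 : j.val ≠ 1 := by omega
      have := h j hge
      simp [pair, ray, hj0, hj1, he2]
      linarith

/-- If some `α_{j1} > 0` and some `α_{j'2} > 0` (completeness), and both
`R_1` and `R_2` have at least two elements, then `R_1 = {(-1,0), (-1,1)}` and
`R_2 = {(0,-1), (1,-1)}`. -/
theorem stmt8 (m : ℕ) (hm : 2 ≤ m) (α1 α2 : Fin m → ℕ)
    (h1 : ∃ j : Fin m, 2 ≤ j.val ∧ 0 < α1 j)
    (h2 : ∃ j : Fin m, 2 ≤ j.val ∧ 0 < α2 j)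
    (hnt1 : (Rset (ray α1 α2) (⟨0, by omega⟩ : Fin m)).Nontrivial)
    (hnt2 : (Rset (ray α1 α2) (⟨1, by omega⟩ : Fin m)).Nontrivial) :
    Rset (ray α1 α2) (⟨0, by omega⟩ : Fin m) = {((-1, 0) : ℤ × ℤ), (-1, 1)} ∧
      Rset (ray α1 α2) (⟨1, by omega⟩ : Fin m) = {((0, -1) : ℤ × ℤ), (1, -1)} := by
  obtain ⟨j1, hj1, hα1⟩ := h1
  obtain ⟨j2, hj2, hα2⟩ := h2
  -- From nontriviality of R_1: α2 j ≤ α1 j for all j ≥ 2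
  have key1 : ∀ j : Fin m, 2 ≤ j.val → (α2 j : ℤ) ≤ (α1 j : ℤ) := by
    obtain ⟨e, he, f, hf, hef⟩ := hnt1
    rw [mem_R0 hm] at he hf
    obtain ⟨he1, he2, heh⟩ := he
    obtain ⟨hf1, hf2, hfh⟩ := hf
    have hne : e.2 ≠ f.2 := by
      intro h
      exact hef (Prod.ext (by rw [he1, hf1]) h)
    intro j hj
    rcases le_or_gt 1 e.2 with h | h
    · have := heh j hj
      nlinarith [Int.natCast_nonneg (α2 j)]
    · have : 1 ≤ f.2 := by omega
      have := hfh j hj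
      nlinarith [Int.natCast_nonneg (α2 j)]
  have key2 : ∀ j : Fin m, 2 ≤ j.val → (α1 j : ℤ) ≤ (α2 j : ℤ) := by
    obtain ⟨e, he, f, hf, hef⟩ := hnt2
    rw [mem_R1 hm] at he hf
    obtain ⟨he2, he1, heh⟩ := he
    obtain ⟨hf2, hf1, hfh⟩ := hf
    have hne : e.1 ≠ f.1 := by
      intro h
      exact hef (Prod.ext h (by rw [he2, hf2]))
    intro j hj
    rcases le_or_gt 1 e.1 with h | h
    · have := heh j hj
      nlinarith [Int.natCast_nonneg (α1 j)]
    · have : 1 ≤ f.1 := by omega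
      have := hfh j hj
      nlinarith [Int.natCast_nonneg (α1 j)]
  have keq : ∀ j : Fin m, 2 ≤ j.val → (α1 j : ℤ) = (α2 j : ℤ) :=
    fun j hj => le_antisymm (key2 j hj) (key1 j hj)
  have hα1' : (0 : ℤ) < α1 j1 := by exact_mod_cast hα1
  have hα2' : (0 : ℤ) < α2 j2 := by exact_mod_cast hα2
  constructor
  · ext e
    rw [mem_R0 hm]
    constructor
    · rintro ⟨he1, he2, h⟩
      have hb : e.2 ≤ 1 := by
        have := h j2 hj2
        nlinarith [keq j2 hj2]
      have : e.2 = 0 ∨ e.2 = 1 := by omega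
      rcases this with h0 | h0
      · left; exact Prod.ext he1 h0
      · right; exact Prod.ext he1 h0
    · rintro (h | h) <;> subst h
      · exact ⟨rfl, by norm_num, fun j hj => by simpa using Int.natCast_nonneg (α1 j)⟩
      · exact ⟨rfl, by norm_num, fun j hj => by simpa using key1 j hj⟩
  · ext e
    rw [mem_R1 hm]
    constructor
    · rintro ⟨he2, he1, h⟩
      have hb : e.1 ≤ 1 := by
        have := h j1 hj1
        nlinarith [keq j1 hj1]
      have : e.1 = 0 ∨ e.1 = 1 := by omega
      rcases this with h0 | h0
      · left; exact Prod.ext h0 he2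
      · right; exact Prod.ext h0 he2
    · rintro (h | h) <;> subst h
      · exact ⟨rfl, by norm_num, fun j hj => by simpa using Int.natCast_nonneg (α2 j)⟩
      · exact ⟨rfl, by norm_num, fun j hj => by simpa using key2 j hj⟩
end

section
/- Let K be a field, m ≥ 1, fix i with 1 ≤ i ≤ m, and let c_1, …, c_m be nonnegative integers with c_i = 0. Then the K-derivation D = (∏_{j≠i} x_j^{c_j}) · ∂/∂x_i of K[x_1, …, x_m] is locally nilpotent: for every f ∈ K[x_1, …, x_m] there exists a positive integer N with D^N(f) = 0, where D^N denotes the N-fold iterate of D. -/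
open MvPolynomial Finset

lemma degreeOf_pderiv_le {K : Type*} [Field K] {m : ℕ} (i : Fin m)
    (f : MvPolynomial (Fin m) K) {n : ℕ} (hf : degreeOf i f ≤ n + 1) :
    degreeOf i (pderiv i f) ≤ n := by
  classical
  conv_lhs => rw [f.as_sum]
  rw [map_sum]
  refine le_trans (degreeOf_sum_le _ _ _) ?_
  simp only [Finset.sup_le_iff]
  intro s hs
  rw [pderiv_monomial]
  have hmon : ∀ (t : Fin m →₀ ℕ) (a : K), degreeOf i (monomial t a) ≤ t i := by
    intro t a
    rcases eq_or_ne a 0 with rfl | ha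
    · simp
    · rw [degreeOf_monomial_eq _ _ ha]
  refine le_trans (hmon _ _) ?_
  have hsi : s i ≤ n + 1 := by
    rw [degreeOf_le_iff] at hf
    exact hf s hs
  rw [Finsupp.tsub_apply]
  simp only [Finsupp.single_eq_same]
  omega

/-- The derivation `D = (∏_{j ≠ i} x_j^{c_j}) ∂/∂x_i` of
`K[x_1, …, x_m]` is locally nilpotent. -/
theorem stmt10 (K : Type*) [Field K] (m : ℕ) (hm : 1 ≤ m) (i : Fin m)
    (c : Fin m → ℕ) (hc : c i = 0) :
    ∀ f : MvPolynomial (Fin m) K, ∃ N : ℕ, 0 < N ∧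
      ((((∏ j ∈ Finset.univ.erase i, (X j : MvPolynomial (Fin m) K) ^ c j) • pderiv i :
          Derivation K (MvPolynomial (Fin m) K) (MvPolynomial (Fin m) K)).toLinearMap) ^ N) f
        = 0 := by
  classical
  set p : MvPolynomial (Fin m) K := ∏ j ∈ Finset.univ.erase i, (X j : MvPolynomial (Fin m) K) ^ c j
    with hp
  have hpdeg : degreeOf i p = 0 := by
    rw [hp]
    refine Nat.eq_zero_of_le_zero ?_
    refine le_trans (degreeOf_prod_le _ _ _) ?_
    refine le_of_eq (Finset.sum_eq_zero fun j hj => ?_)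
    refine Nat.eq_zero_of_le_zero (le_trans (degreeOf_pow_le _ _ _) ?_)
    have : degreeOf i (X j : MvPolynomial (Fin m) K) = 0 := by
      rw [degreeOf_X]
      simp [Ne.symm (Finset.mem_erase.mp hj).1]
    simp [this]
  set D := (p • pderiv i :
      Derivation K (MvPolynomial (Fin m) K) (MvPolynomial (Fin m) K))
  have hD : ∀ f, D f = p * pderiv i f := fun f => rfl
  have key : ∀ n : ℕ, ∀ f : MvPolynomial (Fin m) K, degreeOf i f ≤ n →
      (D.toLinearMap ^ (n + 1)) f = 0 := by
    intro n
    induction n with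
    | zero =>
      intro f hf
      have : pderiv i f = 0 := by
        refine pderiv_eq_zero_of_notMem_vars ?_
        intro hv
        obtain ⟨d, hd, hdi⟩ := (mem_vars i).mp hv
        have h0 := degreeOf_le_iff.mp hf d hd
        rw [Finsupp.mem_support_iff] at hdi
        omega
      simp [pow_one, hD, this]
    | succ n ih =>
      intro f hf
      have h1 : degreeOf i (D f) ≤ n := by
        rw [hD]
        refine le_trans (degreeOf_mul_le _ _ _) ?_
        rw [hpdeg, zero_add]
        exact degreeOf_pderiv_le i f hf
      calc (D.toLinearMap ^ (n + 2)) f = (D.toLinearMap ^ (n + 1)) (D f) := by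
            rw [pow_succ]
            rfl
        _ = 0 := ih _ h1
  intro f
  exact ⟨degreeOf i f + 1, Nat.succ_pos _, key _ f le_rfl⟩
end
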